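/- In Borda voting with m alternatives, if the anchoring point w ∈ Δ_m satisfies w_a ≥ (m−1)·w_{[2]} + Σ_{i=3}^{m} w_{[i]}·(m − 2i + 2), where a is the alternative with the largest weight and w_{[i]} is the i-th largest component of w, then every ranking (permutation score vector) placing a first has ⟨w, r⟩ at least as large as every ranking not placing a first. Equivalently, min over rankings ranking a first of ⟨w,r⟩ ≥ max over rankings not ranking a first of ⟨w,r⟩. -/

import Mathlib

/-!
Since Borda scores are `m - 1` minus ranks, it suffices to compare the rank costs
`∑ i, w i * σ i`. Reindex so that `f = w ∘ τ` is decreasing. By the rearrangement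
inequality a ranking that places the top alternative first costs at most what it costs when the
other alternatives are ranked in reverse order. For a ranking that does not place it first,
lower `f 0` to `f 1`: this keeps `f` decreasing and changes the cost by `(f 0 - f 1)` times the
rank of the top alternative, which is at least `1`. So the cost is at least the cost of the
identity ranking plus `f 0 - f 1`. The hypothesis on `w` says exactly that the first bound does
not exceed the second.
-/

open Finset Function

lemma sum_mul_eq_sum_update_mul_add {ι : Type*} [Fintype ι] [DecidableEq ι]
    (f g : ι → ℝ) (a : ι) (b : ℝ) :
    ∑ i, f i * g i = ∑ i, update f a b i * g i + (f a - b) * g a := by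
  have hrest : ∑ i ∈ {a}ᶜ, update f a b i * g i = ∑ i ∈ {a}ᶜ, f i * g i :=
    sum_congr rfl fun i hi => by rw [update_of_ne (by simpa using hi)]
  rw [Fintype.sum_eq_add_sum_compl a,
    Fintype.sum_eq_add_sum_compl a (fun i => update f a b i * g i), hrest, update_self]
  ring

namespace Fin

variable {m : ℕ} [NeZero m] {f : Fin m → ℝ}

lemma antitone_update_zero (hf : Antitone f) : Antitone (update f 0 (f 1)) := by
  intro i j hij
  rcases eq_or_ne j 0 with rfl | hj
  · rw [le_antisymm hij (zero_le i)]
  rcases eq_or_ne i 0 with rfl | hi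
  · simpa [update_of_ne hj] using hf (one_le_of_ne_zero hj)
  · simpa [update_of_ne hi, update_of_ne hj] using hf hij

/-- `j ↦ -j` is the ranking that keeps `0` first and reverses the order of the others. -/
theorem sum_mul_val_le_sum_mul_val_neg (hf : Antitone f) {π : Equiv.Perm (Fin m)}
    (hπ : π 0 = 0) : ∑ j, f j * (π j : ℝ) ≤ ∑ j, f j * ((-j : Fin m) : ℝ) := by
  set g : Fin m → ℝ := fun j => ((-j : Fin m) : ℝ)
  have hmono : MonovaryOn f g ↑({0}ᶜ : Finset (Fin m)) := by
    intro i hi j hj hij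
    simp only [coe_compl, coe_singleton, Set.mem_compl_iff, Set.mem_singleton_iff] at hi hj
    simp only [g, val_neg, hi, hj, if_false] at hij
    have := i.isLt
    rw [Nat.cast_lt] at hij
    exact hf (le_of_lt (by rw [lt_def]; omega))
  set μ : Equiv.Perm (Fin m) := π.trans (Equiv.neg _)
  have hμ : ∀ j, g (μ j) = π j := fun j => by simp [g, μ]
  have hμ0 : μ 0 = 0 := by simp [μ, hπ]
  have hsupp : {x | μ x ≠ x} ⊆ ↑({0}ᶜ : Finset (Fin m)) := by
    intro x hx
    simp only [coe_compl, coe_singleton, Set.mem_compl_iff, Set.mem_singleton_iff]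
    rintro rfl
    exact hx hμ0
  calc ∑ j, f j * (π j : ℝ) = f 0 * g (μ 0) + ∑ j ∈ {0}ᶜ, f j * g (μ j) := by
        simp only [hμ]; exact Fintype.sum_eq_add_sum_compl 0 _
    _ ≤ f 0 * g 0 + ∑ j ∈ {0}ᶜ, f j * g j := by
        rw [hμ0]; exact add_le_add_right (hmono.sum_mul_comp_perm_le_sum_mul hsupp) _
    _ = ∑ j, f j * g j := (Fintype.sum_eq_add_sum_compl 0 (fun j => f j * g j)).symm

theorem sum_mul_val_add_sub_le (hf : Antitone f) {π : Equiv.Perm (Fin m)} (hπ : π 0 ≠ 0) :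
    ∑ j, f j * (j : ℝ) + (f 0 - f 1) ≤ ∑ j, f j * (π j : ℝ) := by
  have hrank : (1 : ℝ) ≤ (π 0 : ℕ) := by
    exact_mod_cast Nat.one_le_iff_ne_zero.2 (val_ne_zero_iff.2 hπ)
  have hdrop : f 0 - f 1 ≤ (f 0 - f 1) * (π 0 : ℕ) :=
    le_mul_of_one_le_right (sub_nonneg.2 (hf (zero_le 1))) hrank
  have hrearr := ((antitone_update_zero hf).antivary
    (Nat.mono_cast.comp val_strictMono.monotone)).sum_mul_le_sum_mul_comp_perm (σ := π)
  rw [sum_mul_eq_sum_update_mul_add f _ 0 (f 1),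
    sum_mul_eq_sum_update_mul_add f (fun j => (π j : ℝ)) 0 (f 1)]
  simp only [comp_apply, val_zero, Nat.cast_zero, mul_zero, add_zero] at hrearr ⊢
  linarith

theorem sum_mul_val_neg_le (hm : 1 < m)
    (hcond : (m - 1 : ℝ) * f 1 + ∑ i ∈ univ.filter (fun i : Fin m => 2 ≤ (i : ℕ)),
      f i * ((m : ℝ) - 2 * (i : ℕ)) ≤ f 0) :
    ∑ j, f j * ((-j : Fin m) : ℝ) ≤ ∑ j, f j * (j : ℝ) + (f 0 - f 1) := by
  have hval1 : ((1 : Fin m) : ℕ) = 1 := by rw [val_one', Nat.mod_eq_of_lt hm]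
  have h01 : (0 : Fin m) ≠ 1 := by rw [Ne, Fin.ext_iff, hval1, val_zero]; omega
  have hsplit : ∀ F : Fin m → ℝ,
      ∑ j, F j = F 0 + F 1 + ∑ j ∈ univ.filter (fun i : Fin m => 2 ≤ (i : ℕ)), F j := by
    intro F
    have hsmall : univ.filter (fun i : Fin m => ¬ 2 ≤ (i : ℕ)) = {0, 1} := by
      ext j
      simp only [mem_filter, mem_univ, true_and, mem_insert, mem_singleton, Fin.ext_iff, hval1,
        val_zero]
      omega
    rw [← sum_filter_not_add_sum_filter univ (fun i : Fin m => 2 ≤ (i : ℕ)), hsmall,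
      sum_pair h01]
  have hbig : ∀ j ∈ univ.filter (fun i : Fin m => 2 ≤ (i : ℕ)),
      f j * ((-j : Fin m) : ℝ) = f j * (j : ℝ) + f j * ((m : ℝ) - 2 * (j : ℕ)) := by
    intro j hj
    have hj : 2 ≤ (j : ℕ) := (mem_filter.1 hj).2
    rw [val_neg, if_neg (fun h => by simp [h] at hj), Nat.cast_sub j.isLt.le]
    ring
  rw [hsplit, hsplit (fun j => f j * (j : ℝ)), sum_congr rfl hbig, sum_add_distrib]
  simp only [val_neg, hval1, if_neg h01.symm, if_true, val_zero]
  push_cast [Nat.cast_sub hm.le]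
  linarith

end Fin

/-- `σ i` is the rank of alternative `i` (rank `0` is first), so its Borda score is
`m - 1 - σ i`; `w (τ i)` is the `(i+1)`-st largest component of `w`. -/
theorem borda_top_reports_most_aligned (m : ℕ) (hm : 3 ≤ m)
    (w : Fin m → ℝ)
    (τ : Equiv.Perm (Fin m)) (hτ : Antitone fun i => w (τ i))
    (a : Fin m) (ha : a = τ ⟨0, by omega⟩)
    (hcond : w a ≥ (m - 1 : ℝ) * w (τ ⟨1, by omega⟩)
        + ∑ i ∈ Finset.univ.filter (fun i : Fin m => 2 ≤ (i : ℕ)),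
            w (τ i) * ((m : ℝ) - 2 * (i : ℕ))) :
    ∀ σ σ' : Equiv.Perm (Fin m), (σ a : ℕ) = 0 → (σ' a : ℕ) ≠ 0 →
      ∑ i, w i * ((m : ℝ) - 1 - (σ' i : ℕ)) ≤ ∑ i, w i * ((m : ℝ) - 1 - (σ i : ℕ)) := by
  intro σ σ' hσ hσ'
  have : NeZero m := ⟨by omega⟩
  obtain rfl : a = τ 0 := ha
  have h1 : (⟨1, by omega⟩ : Fin m) = 1 :=
    Fin.ext (by rw [Fin.val_one', Nat.mod_eq_of_lt (by omega)])
  rw [h1] at hcond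
  have hscore : ∀ π : Equiv.Perm (Fin m), ∑ i, w i * ((m : ℝ) - 1 - (π i : ℕ))
      = ((m : ℝ) - 1) * ∑ i, w i - ∑ j, w (τ j) * (π (τ j) : ℝ) := fun π => by
    rw [mul_sum, Equiv.sum_comp τ (fun i => w i * (π i : ℝ)), ← sum_sub_distrib]
    exact sum_congr rfl fun i _ => by ring
  suffices ∑ j, w (τ j) * (σ (τ j) : ℝ) ≤ ∑ j, w (τ j) * (σ' (τ j) : ℝ) by
    rw [hscore, hscore]
    linarith
  calc ∑ j, w (τ j) * (σ (τ j) : ℝ) ≤ ∑ j, w (τ j) * ((-j : Fin m) : ℝ) :=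
        Fin.sum_mul_val_le_sum_mul_val_neg hτ (π := τ.trans σ) (Fin.ext hσ)
    _ ≤ ∑ j, w (τ j) * (j : ℝ) + (w (τ 0) - w (τ 1)) :=
        Fin.sum_mul_val_neg_le (by omega) hcond
    _ ≤ ∑ j, w (τ j) * (σ' (τ j) : ℝ) :=
        Fin.sum_mul_val_add_sub_le hτ (π := τ.trans σ') (Fin.val_ne_zero_iff.1 hσ')
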